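/- arXiv:1301.2799 — 5 statements merged into one kernel-verified Lean document; each statement's English description precedes it below -/
import Mathlib

section
/- Let V ∈ (ℝ⁺)^k be a vector with nonnegative real entries. Then there exist a matrix E ∈ GL(k, ℤ) and a vector W ∈ ℤ^k such that all coefficients of EV − W are nonnegative and their sum is strictly less than 1. -/
/-!
Only fractional parts matter: with `W = E ⌊V⌋` the vector `EV - W` is `E {V}`. A permutation
matrix sorts the fractional parts as `0 ≤ x₀ ≤ ⋯ ≤ xₘ < 1`, and the unimodular bidiagonal matrix
of successive differences sends them to `x₀, x₁ - x₀, …, xₘ - xₘ₋₁`, which are nonnegative and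
telescope to `xₘ < 1`.
-/

open Matrix

namespace Matrix

variable (R : Type*) [Ring R] (m : ℕ)

def diffMatrix : Matrix (Fin (m + 1)) (Fin (m + 1)) R :=
  of fun i j => (if j = i then 1 else 0) - if (j : ℕ) + 1 = i then 1 else 0

variable {R m}

theorem diffMatrix_isLowerTriangular : (diffMatrix R m).IsLowerTriangular := by
  intro i j hij
  replace hij : i < j := hij
  have h₂ : (j : ℕ) + 1 ≠ i := by have : (i : ℕ) < j := hij; omega
  simp [diffMatrix, hij.ne', h₂]

theorem det_diffMatrix {R : Type*} [CommRing R] : (diffMatrix R m).det = 1 := by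
  rw [det_of_isLowerTriangular _ diffMatrix_isLowerTriangular]
  simp [diffMatrix]

theorem map_diffMatrix {S : Type*} [Ring S] (f : R →+* S) :
    (diffMatrix R m).map f = diffMatrix S m := by
  ext i j
  simp [diffMatrix, apply_ite f]

theorem diffMatrix_mulVec_zero (z : Fin (m + 1) → R) : (diffMatrix R m *ᵥ z) 0 = z 0 := by
  simp [diffMatrix, mulVec, dotProduct]

theorem diffMatrix_mulVec_succ (z : Fin (m + 1) → R) (i : Fin m) :
    (diffMatrix R m *ᵥ z) i.succ = z i.succ - z i.castSucc := by
  have (j : Fin (m + 1)) : (j : ℕ) = i ↔ j = i.castSucc := by simp [Fin.ext_iff]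
  simp [diffMatrix, mulVec, dotProduct, sub_mul, this]

theorem sum_diffMatrix_mulVec (z : Fin (m + 1) → R) :
    ∑ i, (diffMatrix R m *ᵥ z) i = z (Fin.last m) := by
  have h₁ := Fin.sum_univ_succ z
  have h₂ := Fin.sum_univ_castSucc z
  simp only [Fin.sum_univ_succ, diffMatrix_mulVec_zero, diffMatrix_mulVec_succ]
  rw [Finset.sum_sub_distrib, ← add_sub_assoc, ← h₁, h₂, add_sub_cancel_left]

theorem diffMatrix_mulVec_nonneg [PartialOrder R] [IsOrderedAddMonoid R] {z : Fin (m + 1) → R}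
    (hz : Monotone z) (h₀ : 0 ≤ z 0) (i : Fin (m + 1)) : 0 ≤ (diffMatrix R m *ᵥ z) i := by
  cases i using Fin.cases with
  | zero => rwa [diffMatrix_mulVec_zero]
  | succ i => exact (diffMatrix_mulVec_succ z i).symm ▸ sub_nonneg.2 (hz i.castSucc_le_succ)

end Matrix

theorem exists_isUnit_det_mulVec_nonneg_sum_eq {R : Type*} [CommRing R] [LinearOrder R]
    [IsOrderedAddMonoid R] {m : ℕ} (x : Fin (m + 1) → R) (hx : ∀ i, 0 ≤ x i) :
    ∃ E : Matrix (Fin (m + 1)) (Fin (m + 1)) ℤ, IsUnit E.det ∧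
      (∀ i, 0 ≤ (E.map (Int.cast : ℤ → R) *ᵥ x) i) ∧
      ∃ j, ∑ i, (E.map (Int.cast : ℤ → R) *ᵥ x) i = x j := by
  set σ := Tuple.sort x
  have hE : (diffMatrix ℤ m * σ.permMatrix ℤ).map (Int.cast : ℤ → R) *ᵥ x
      = diffMatrix R m *ᵥ (x ∘ σ) := by
    have hmap : (diffMatrix ℤ m * σ.permMatrix ℤ).map (Int.cast : ℤ → R)
        = diffMatrix R m * σ.permMatrix R :=
      calc _ = (diffMatrix ℤ m * σ.permMatrix ℤ).map (Int.castRingHom R) := rfl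
        _ = _ := by rw [Matrix.map_mul, map_diffMatrix, Equiv.Perm.permMatrix, PEquiv.map_toMatrix]
    rw [hmap, ← mulVec_mulVec, permMatrix_mulVec]
  refine ⟨diffMatrix ℤ m * σ.permMatrix ℤ, ?_, fun i => ?_, σ (Fin.last m), ?_⟩
  · simp [det_diffMatrix]
  · rw [hE]
    exact diffMatrix_mulVec_nonneg (Tuple.monotone_sort x) (hx _) i
  · rw [hE, sum_diffMatrix_mulVec]
    rfl

theorem mulVec_sub_mulVec_floor {R : Type*} [Ring R] [LinearOrder R] [FloorRing R]
    {m n : Type*} [Fintype n] (E : Matrix m n ℤ) (V : n → R) (i : m) :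
    (E.map (Int.cast : ℤ → R) *ᵥ V) i - ((E *ᵥ fun j => ⌊V j⌋) i : R)
      = (E.map (Int.cast : ℤ → R) *ᵥ fun j => Int.fract (V j)) i := by
  rw [← eq_intCast (Int.castRingHom R), RingHom.map_mulVec, show (fun j => Int.fract (V j)) = V - (Int.cast ∘ fun j => ⌊V j⌋) from rfl,
    mulVec_sub]
  rfl

theorem stmt3_general (k : ℕ) (V : Fin k → ℝ) :
    ∃ (E : Matrix (Fin k) (Fin k) ℤ) (W : Fin k → ℤ), IsUnit E.det ∧
      (∀ i, 0 ≤ (E.map (Int.cast : ℤ → ℝ)).mulVec V i - (W i : ℝ)) ∧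
      ∑ i, ((E.map (Int.cast : ℤ → ℝ)).mulVec V i - (W i : ℝ)) < 1 := by
  cases k with
  | zero => exact ⟨1, 0, by simp, fun i => i.elim0, by simp⟩
  | succ m =>
    obtain ⟨E, hdet, hnonneg, j, hsum⟩ :=
      exists_isUnit_det_mulVec_nonneg_sum_eq (fun i => Int.fract (V i)) fun i => Int.fract_nonneg _
    refine ⟨E, E *ᵥ fun l => ⌊V l⌋, hdet, fun i => ?_, ?_⟩ <;>
      simp only [mulVec_sub_mulVec_floor]
    · exact hnonneg i
    · exact hsum ▸ Int.fract_lt_one _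

/-- for a nonnegative real vector V there exist E ∈ GL(k,ℤ) and W ∈ ℤ^k
such that EV − W has nonnegative entries summing to less than 1. -/
theorem stmt3 (k : ℕ) (hk : 0 < k) (V : Fin k → ℝ) (hV : ∀ i, 0 ≤ V i) :
    ∃ (E : Matrix (Fin k) (Fin k) ℤ) (W : Fin k → ℤ), IsUnit E.det ∧
      (∀ i, 0 ≤ (E.map (Int.cast : ℤ → ℝ)).mulVec V i - (W i : ℝ)) ∧
      ∑ i, ((E.map (Int.cast : ℤ → ℝ)).mulVec V i - (W i : ℝ)) < 1 :=
  stmt3_general k V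
end

section
/- Let U be a noncyclic subgroup of ℚ (of rank one) such that U is not p-divisible for any prime p (no prime occurs with infinite multiplicity in its supernatural number). Then for every integer l > 1, the quotient U/lU is cyclic of order l. -/
/-!
Any two elements of a subgroup `U ≤ ℚ` are integer multiples of a single element of `U`, since
finitely generated fractional ideals over the PID `ℤ` are principal. Combining this with `pU ≠ U`
for the primes `p ∣ l` yields `u ∈ U` lying in no such `pU`. Then every `w ∈ U` is `b • g` with
`u = a • g`, `g ∈ U` and `a` prime to `l`, so `w ≡ (b a⁻¹) • u` modulo `lU`, and `n • u ∈ lU`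
forces `l ∣ n`. Hence `n ↦ n • u` induces `ZMod l ≃+ U ⧸ lU`.
-/

theorem Submodule.isPrincipal_of_fg_of_isFractionRing {R K : Type*} [CommRing R] [IsDomain R]
    [IsPrincipalIdealRing R] [Field K] [Algebra R K] [IsFractionRing R K] {I : Submodule R K}
    (hI : I.FG) : I.IsPrincipal :=
  FractionalIdeal.isPrincipal
    (⟨I, FractionalIdeal.isFractional_of_fg hI⟩ : FractionalIdeal (nonZeroDivisors R) K)

namespace AddSubgroup

variable {R : Type*} [Ring R] {U : AddSubgroup R}

theorem map_mulLeft_natCast_le (U : AddSubgroup R) (n : ℕ) :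
    U.map (AddMonoidHom.mulLeft (n : R)) ≤ U := by
  rintro _ ⟨v, hv, rfl⟩
  simpa [nsmul_eq_mul] using U.nsmul_mem hv n

theorem zsmul_mem_map_mulLeft {g : R} (hg : g ∈ U) {n : ℕ} {a : ℤ} (h : (n : ℤ) ∣ a) :
    a • g ∈ U.map (AddMonoidHom.mulLeft (n : R)) := by
  obtain ⟨k, rfl⟩ := h
  exact ⟨k • g, U.zsmul_mem hg k, by simp [zsmul_eq_mul, mul_assoc]⟩

end AddSubgroup

noncomputable def QuotientAddGroup.addEquivZMod {G : Type*} [AddCommGroup G] {H : AddSubgroup G}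
    {x : G} {l : ℕ} (hker : ∀ n : ℤ, n • x ∈ H ↔ (l : ℤ) ∣ n)
    (hgen : ∀ y : G, ∃ n : ℤ, y - n • x ∈ H) : G ⧸ H ≃+ ZMod l :=
  let f : ℤ →+ G ⧸ H := (mk' H).comp (zmultiplesHom G x)
  have hf_ker : f.ker = AddSubgroup.zmultiples (l : ℤ) := by
    ext n
    simp only [f, AddMonoidHom.mem_ker, AddMonoidHom.comp_apply, zmultiplesHom_apply, mk'_apply,
      eq_zero_iff, hker, Int.mem_zmultiples_iff]
  have hf_surj : Function.Surjective f := by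
    rintro ⟨y⟩
    obtain ⟨n, hn⟩ := hgen y
    exact ⟨n, (eq_iff_sub_mem.2 hn).symm⟩
  (quotientKerEquivOfSurjective f hf_surj).symm.trans <|
    (quotientAddEquivOfEq hf_ker).trans (Int.quotientZMultiplesNatEquivZMod l)

namespace AddSubgroup

variable {U : AddSubgroup ℚ}

theorem exists_zsmul_eq_of_mem_rat {u w : ℚ} (hu : u ∈ U) (hw : w ∈ U) :
    ∃ g ∈ U, (∃ a : ℤ, a • g = u) ∧ ∃ b : ℤ, b • g = w := by
  obtain ⟨g, hg⟩ := (Submodule.isPrincipal_of_fg_of_isFractionRing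
    (Submodule.fg_span (Set.toFinite {u, w}) : (Submodule.span ℤ {u, w}).FG)).principal
  have hspan_le : Submodule.span ℤ {u, w} ≤ U.toIntSubmodule :=
    Submodule.span_le.2 (Set.insert_subset hu (Set.singleton_subset_iff.2 hw))
  refine ⟨g, hspan_le (hg ▸ Submodule.mem_span_singleton_self g), ?_, ?_⟩
  · exact Submodule.mem_span_singleton.1 (hg ▸ Submodule.subset_span (by simp))
  · exact Submodule.mem_span_singleton.1 (hg ▸ Submodule.subset_span (by simp))

theorem exists_mem_forall_notMem_map_mulLeft (S : Finset ℕ)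
    (hS : ∀ n ∈ S, U.map (AddMonoidHom.mulLeft (n : ℚ)) ≠ U) :
    ∃ u ∈ U, ∀ n ∈ S, u ∉ U.map (AddMonoidHom.mulLeft (n : ℚ)) := by
  induction S using Finset.induction_on with
  | empty => exact ⟨0, U.zero_mem, by simp⟩
  | insert q S _ ih =>
    obtain ⟨u, hu, hgood⟩ := ih fun n hn => hS n (Finset.mem_insert_of_mem hn)
    obtain ⟨w, hw, hwq⟩ := SetLike.exists_of_lt <|
      (U.map_mulLeft_natCast_le q).lt_of_ne (hS q (Finset.mem_insert_self q S))
    obtain ⟨g, hg, ⟨a, rfl⟩, b, rfl⟩ := exists_zsmul_eq_of_mem_rat hu hw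
    refine ⟨g, hg, fun n hn hgn => ?_⟩
    rcases Finset.mem_insert.1 hn with rfl | hn
    exacts [hwq (zsmul_mem hgn b), hgood n hn (zsmul_mem hgn a)]

variable {l : ℕ} {u : ℚ}

theorem isCoprime_of_zsmul_eq {g : ℚ} {a : ℤ} (hl : l ≠ 0) (hg : g ∈ U) (hu : a • g = u)
    (hgood : ∀ p ∈ l.primeFactors, u ∉ U.map (AddMonoidHom.mulLeft (p : ℚ))) :
    IsCoprime a l := by
  rw [Int.isCoprime_iff_gcd_eq_one]
  by_contra hne
  obtain ⟨p, hp, hpd⟩ := Nat.exists_prime_and_dvd hne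
  have hpl : p ∣ l := hpd.trans (Int.natCast_dvd_natCast.1 (Int.gcd_dvd_right a l))
  have hpa : (p : ℤ) ∣ a := (Int.natCast_dvd_natCast.2 hpd).trans (Int.gcd_dvd_left a l)
  exact hgood p (Nat.mem_primeFactors_of_ne_zero hl |>.2 ⟨hp, hpl⟩)
    (hu ▸ zsmul_mem_map_mulLeft hg hpa)

theorem zsmul_mem_map_mulLeft_iff (hl : 1 < l) (hu : u ∈ U)
    (hgood : ∀ p ∈ l.primeFactors, u ∉ U.map (AddMonoidHom.mulLeft (p : ℚ))) (n : ℤ) :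
    n • u ∈ U.map (AddMonoidHom.mulLeft (l : ℚ)) ↔ (l : ℤ) ∣ n := by
  refine ⟨?_, zsmul_mem_map_mulLeft hu⟩
  rintro ⟨v, hv, hvu⟩
  obtain ⟨g, hg, ⟨a, rfl⟩, c, rfl⟩ := exists_zsmul_eq_of_mem_rat hu hv
  have hg0 : g ≠ 0 := by
    rintro rfl
    obtain ⟨p, hp⟩ := l.nonempty_primeFactors.2 hl
    exact hgood p hp (by simp)
  have hcop : IsCoprime (l : ℤ) a := (isCoprime_of_zsmul_eq (by omega) hg rfl hgood).symm
  have hlc : (l : ℤ) * c = n * a := by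
    simp only [AddMonoidHom.coe_mulLeft, zsmul_eq_mul] at hvu
    have : ((l * c : ℤ) : ℚ) * g = ((n * a : ℤ) : ℚ) * g := by
      push_cast
      linear_combination hvu
    exact_mod_cast mul_right_cancel₀ hg0 this
  exact hcop.dvd_of_dvd_mul_right ⟨c, hlc.symm⟩

theorem exists_sub_zsmul_mem_map_mulLeft (hl : l ≠ 0) (hu : u ∈ U)
    (hgood : ∀ p ∈ l.primeFactors, u ∉ U.map (AddMonoidHom.mulLeft (p : ℚ))) {w : ℚ}
    (hw : w ∈ U) : ∃ n : ℤ, w - n • u ∈ U.map (AddMonoidHom.mulLeft (l : ℚ)) := by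
  obtain ⟨g, hg, ⟨a, rfl⟩, b, rfl⟩ := exists_zsmul_eq_of_mem_rat hu hw
  obtain ⟨x, y, hxy⟩ := isCoprime_of_zsmul_eq hl hg rfl hgood
  have hsub : b • g - (b * x) • a • g = (l * (b * y)) • g := by
    rw [smul_smul, ← sub_smul]
    congr 1
    linear_combination -b * hxy
  exact ⟨b * x, hsub ▸ zsmul_mem_map_mulLeft hg (dvd_mul_right _ _)⟩

end AddSubgroup

theorem stmt11_general (U : AddSubgroup ℚ)
    (hdiv : ∀ p : ℕ, p.Prime → U.map (AddMonoidHom.mulLeft (p : ℚ)) ≠ U)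
    (l : ℕ) (hl : 1 < l) :
    Nonempty
      ((U ⧸ ((U.map (AddMonoidHom.mulLeft (l : ℚ))).addSubgroupOf U)) ≃+ ZMod l) := by
  obtain ⟨u, hu, hgood⟩ := U.exists_mem_forall_notMem_map_mulLeft l.primeFactors
    fun p hp => hdiv p (Nat.prime_of_mem_primeFactors hp)
  refine ⟨QuotientAddGroup.addEquivZMod (x := ⟨u, hu⟩) (fun n => ?_) (fun w => ?_)⟩
  · simpa [AddSubgroup.mem_addSubgroupOf] using AddSubgroup.zsmul_mem_map_mulLeft_iff hl hu hgood n
  · obtain ⟨n, hn⟩ := AddSubgroup.exists_sub_zsmul_mem_map_mulLeft (by omega) hu hgood w.2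
    exact ⟨n, by simpa [AddSubgroup.mem_addSubgroupOf] using hn⟩

/-- if U ≤ ℚ is noncyclic and pU ≠ U for every prime p, then for every
integer l > 1 the quotient U/lU is cyclic of order l. -/
theorem stmt11 (U : AddSubgroup ℚ) (hU : U ≠ ⊥)
    (hnc : ¬ ∃ a : ℚ, U = AddSubgroup.closure {a})
    (hdiv : ∀ p : ℕ, p.Prime → U.map (AddMonoidHom.mulLeft (p : ℚ)) ≠ U)
    (l : ℕ) (hl : 1 < l) :
    Nonempty
      ((U ⧸ ((U.map (AddMonoidHom.mulLeft (l : ℚ))).addSubgroupOf U)) ≃+ ZMod l) :=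
  stmt11_general U hdiv l hl
end

section
/- Let t : G → U be a surjective homomorphism of torsion-free abelian groups, with G of finite rank and U = ℤ[1/p] for some prime p. If G contains a noncyclic rank-one subgroup H with H ∩ ker t = {0}, then the extension 0 → ker t → G → U → 0 is nearly split: ker t ⊕ H has finite index in G. -/
open TensorProduct

/-- The subgroup ℤ[1/p] of ℚ. -/
def zOneOver (p : ℕ) : AddSubgroup ℚ :=
  AddSubgroup.closure {x : ℚ | ∃ n : ℕ, x = 1 / (p : ℚ) ^ n}

/-- A subgroup is rank one: nonzero, and any two nonzero elements are rationally dependent. -/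
def IsRankOne {J : Type*} [AddCommGroup J] (H : AddSubgroup J) : Prop :=
  H ≠ ⊥ ∧ ∀ a ∈ H, ∀ b ∈ H, a ≠ 0 → b ≠ 0 → ∃ m n : ℤ, m ≠ 0 ∧ m • a = n • b

/-!
Since `H ∩ ker t = 0`, `t` maps `H` isomorphically onto a noncyclic subgroup `A` of `ℤ[1/p]`, and
`ker t ⊔ H` is the preimage of `A`, so its index is that of `A` in `ℤ[1/p]`. Noncyclicity means
`A` is not contained in any `p^{-N} ℤ`, and reducing an element outside it shows that `A` contains
some `c / p^N` with `p ∤ c`, for every `N`. Bézout then gives `ℤ[1/p] = A + ℤ`, and `A ∩ ℤ`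
contains such a nonzero `c`, so `[ℤ[1/p] : A] = [ℤ : A ∩ ℤ]` is finite.
-/

theorem AddSubgroup.relIndex_ne_zero_of_le_sup_range {G : Type*} [AddCommGroup G]
    {A U : AddSubgroup G} (f : ℤ →+ G) (hU : U ≤ A ⊔ f.range) {c : ℤ} (hc0 : c ≠ 0)
    (hc : f c ∈ A) : A.relIndex U ≠ 0 := by
  have hrange : A.relIndex f.range ≠ 0 := by
    rw [← AddSubgroup.index_comap]
    refine ne_zero_of_dvd_ne_zero ?_ (AddSubgroup.index_dvd_of_le (zmultiples_le.mpr hc))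
    rwa [Int.index_zmultiples, Int.natAbs_ne_zero]
  refine mt (AddSubgroup.relIndex_eq_zero_of_le_right hU) ?_
  rwa [AddSubgroup.relIndex_sup_left]

section zOneOver

variable {p : ℕ}

theorem exists_eq_div_pow_of_mem_zOneOver (hp : p ≠ 0) {x : ℚ} (hx : x ∈ zOneOver p) :
    ∃ (a : ℤ) (n : ℕ), x = a / (p : ℚ) ^ n := by
  induction hx using AddSubgroup.closure_induction with
  | mem x hx => obtain ⟨n, rfl⟩ := hx; exact ⟨1, n, by simp⟩
  | zero => exact ⟨0, 0, by simp⟩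
  | add _ _ _ _ ha hb =>
    obtain ⟨a, m, rfl⟩ := ha
    obtain ⟨b, n, rfl⟩ := hb
    refine ⟨a * p ^ n + b * p ^ m, m + n, ?_⟩
    field_simp
    push_cast
    ring
  | neg _ _ ha =>
    obtain ⟨a, m, rfl⟩ := ha
    exact ⟨-a, m, by push_cast; ring⟩

theorem le_zmultiples_of_forall_dvd (hp : p ≠ 0) {A : AddSubgroup ℚ} (hA : A ≤ zOneOver p)
    (N : ℕ) (hdvd : ∀ c : ℤ, (c : ℚ) / (p : ℚ) ^ N ∈ A → (p : ℤ) ∣ c) :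
    A ≤ AddSubgroup.zmultiples (1 / (p : ℚ) ^ N) := by
  have hsmall : ∀ (b : ℤ) (n : ℕ), n ≤ N →
      (b : ℚ) / (p : ℚ) ^ n ∈ AddSubgroup.zmultiples (1 / (p : ℚ) ^ N) := by
    intro b n hn
    refine AddSubgroup.mem_zmultiples_iff.mpr ⟨b * p ^ (N - n), ?_⟩
    rw [← pow_sub_mul_pow (p : ℚ) hn, zsmul_eq_mul]
    push_cast
    field_simp
  intro x hxA
  obtain ⟨b, n, rfl⟩ := exists_eq_div_pow_of_mem_zOneOver hp (hA hxA)
  induction n generalizing b with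
  | zero => exact hsmall b 0 N.zero_le
  | succ n ih =>
    rcases le_or_gt (n + 1) N with hn | hn
    · exact hsmall b (n + 1) hn
    have hlift : (b : ℚ) / (p : ℚ) ^ N =
        ((p : ℤ) ^ (n + 1 - N)) • ((b : ℚ) / (p : ℚ) ^ (n + 1)) := by
      rw [← pow_sub_mul_pow (p : ℚ) hn.le, zsmul_eq_mul]
      push_cast
      field_simp
    obtain ⟨b', rfl⟩ := hdvd b (hlift ▸ AddSubgroup.zsmul_mem A hxA _)
    have hcancel : (((p : ℤ) * b' : ℤ) : ℚ) / (p : ℚ) ^ (n + 1) = (b' : ℚ) / (p : ℚ) ^ n := by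
      field_simp
      push_cast
      ring
    rw [hcancel] at hxA ⊢
    exact ih b' hxA

theorem exists_div_pow_mem_of_not_isAddCyclic (hp : p ≠ 0) {A : AddSubgroup ℚ}
    (hA : A ≤ zOneOver p) (hcyc : ¬ IsAddCyclic A) (N : ℕ) :
    ∃ c : ℤ, ¬ (p : ℤ) ∣ c ∧ (c : ℚ) / (p : ℚ) ^ N ∈ A := by
  by_contra! hdvd
  exact hcyc <| AddSubgroup.isAddCyclic_of_le <|
    le_zmultiples_of_forall_dvd hp hA N fun c hc ↦ not_not.mp fun h ↦ hdvd c h hc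

theorem zOneOver_le_sup_range (hp : p.Prime) {A : AddSubgroup ℚ}
    (hA : ∀ N : ℕ, ∃ c : ℤ, ¬ (p : ℤ) ∣ c ∧ (c : ℚ) / (p : ℚ) ^ N ∈ A) :
    zOneOver p ≤ A ⊔ (Int.castAddHom ℚ).range := by
  rw [zOneOver, AddSubgroup.closure_le]
  rintro _ ⟨N, rfl⟩
  obtain ⟨c, hpc, hc⟩ := hA N
  obtain ⟨u, v, huv⟩ :=
    (((Nat.prime_iff_prime_int.mp hp).coprime_iff_not_dvd.mpr hpc).pow_left (m := N)).symm
  have : 1 / (p : ℚ) ^ N = u • ((c : ℚ) / (p : ℚ) ^ N) + Int.castAddHom ℚ v := by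
    have hp0 : (p : ℚ) ≠ 0 := Nat.cast_ne_zero.mpr hp.ne_zero
    have h1 : (u : ℚ) * c + v * (p : ℚ) ^ N = 1 := by exact_mod_cast huv
    rw [zsmul_eq_mul, Int.coe_castAddHom]
    field_simp
    linear_combination -h1
  rw [this]
  exact AddSubgroup.add_mem_sup (AddSubgroup.zsmul_mem _ hc u) ⟨v, rfl⟩

theorem relIndex_zOneOver_ne_zero (hp : p.Prime) {A : AddSubgroup ℚ} (hA : A ≤ zOneOver p)
    (hcyc : ¬ IsAddCyclic A) : A.relIndex (zOneOver p) ≠ 0 := by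
  have hgood := exists_div_pow_mem_of_not_isAddCyclic hp.ne_zero hA hcyc
  obtain ⟨c, hpc, hc⟩ := hgood 0
  have hc0 : c ≠ 0 := by rintro rfl; exact hpc (dvd_zero _)
  exact AddSubgroup.relIndex_ne_zero_of_le_sup_range _ (zOneOver_le_sup_range hp hgood) hc0
    (by simpa using hc)

end zOneOver

theorem AddSubgroup.isAddCyclic_of_isAddCyclic_map {G G' : Type*} [AddGroup G] [AddGroup G']
    (f : G →+ G') (H : AddSubgroup G) (hH : H ⊓ f.ker = ⊥) [IsAddCyclic (H.map f)] :
    IsAddCyclic H := by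
  refine isAddCyclic_of_injective (f.addSubgroupMap H) ?_
  rw [injective_iff_map_eq_zero]
  intro x hx
  have : (x : G) ∈ H ⊓ f.ker := ⟨x.2, congrArg Subtype.val hx⟩
  simpa [hH] using this

theorem stmt13_general {G : Type*} [AddCommGroup G]
    (p : ℕ) (hp : p.Prime) (t : G →+ ℚ) (hrange : t.range = zOneOver p)
    (H : AddSubgroup G)
    (hnc : ¬ ∃ g : G, H = AddSubgroup.closure {g})
    (hdisj : H ⊓ t.ker = ⊥) :
    (t.ker ⊔ H).index ≠ 0 := by
  have hcyc : ¬ IsAddCyclic (H.map t) := fun _ ↦ hnc <| by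
    obtain ⟨g, hg⟩ := H.isAddCyclic_iff_exists_zmultiples_eq_top.mp
      (H.isAddCyclic_of_isAddCyclic_map t hdisj)
    exact ⟨g, by rw [← hg, AddSubgroup.zmultiples_eq_closure]⟩
  rw [sup_comm, ← AddSubgroup.comap_map_eq, AddSubgroup.index_comap, hrange]
  exact relIndex_zOneOver_ne_zero hp (hrange ▸ AddSubgroup.map_le_range t H) hcyc

/-- for t : G → ℤ[1/p] surjective, G finite-rank torsion-free, if G has a
noncyclic rank-one subgroup H with H ∩ ker t = 0, then ker t ⊕ H has finite index in G
(the extension is nearly split). -/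
theorem stmt13 {G : Type*} [AddCommGroup G] [NoZeroSMulDivisors ℤ G]
    (hfr : Module.rank ℚ (ℚ ⊗[ℤ] G) < Cardinal.aleph0)
    (p : ℕ) (hp : p.Prime) (t : G →+ ℚ) (hrange : t.range = zOneOver p)
    (H : AddSubgroup G) (h1 : IsRankOne H)
    (hnc : ¬ ∃ g : G, H = AddSubgroup.closure {g})
    (hdisj : H ⊓ t.ker = ⊥) :
    (t.ker ⊔ H).index ≠ 0 :=
  stmt13_general p hp t hrange H hnc hdisj
end

section
/- Every noncyclic subgroup of ℤ[1/p] (p a prime) is of finite index in ℤ[1/p]. -/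
open AddSubgroup

theorem relIndex_ne_zero_of_le_sup_zmultiples {G : Type*} [AddCommGroup G] {V K : AddSubgroup G}
    {x : G} {n : ℤ} (hn : n ≠ 0) (hnx : n • x ∈ V) (hK : K ≤ V ⊔ zmultiples x) :
    V.relIndex K ≠ 0 := by
  refine mt (relIndex_eq_zero_of_le_right hK) ?_
  rw [relIndex_sup_left, ← range_zmultiplesHom, ← index_comap]
  have hle : zmultiples n ≤ V.comap (zmultiplesHom G x) := by
    rw [zmultiples_le]
    exact hnx
  refine ne_zero_of_dvd_ne_zero ?_ (index_dvd_of_le hle)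
  rw [Int.index_zmultiples]
  exact Int.natAbs_ne_zero.mpr hn

theorem mem_zmultiples_inv_of_den_dvd {x : ℚ} {d : ℕ} (hd : d ≠ 0) (h : x.den ∣ d) :
    x ∈ zmultiples (d : ℚ)⁻¹ := by
  obtain ⟨m, rfl⟩ := h
  refine ⟨x.num * m, ?_⟩
  have hm : (m : ℚ) ≠ 0 := by simp_all
  have := x.den_ne_zero
  change (x.num * m : ℤ) • ((x.den * m : ℕ) : ℚ)⁻¹ = x
  rw [zsmul_eq_mul]
  push_cast
  nth_rw 3 [← Rat.num_div_den x]
  field_simp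

section

variable {V : AddSubgroup ℚ}

theorem intCast_div_den_mem {c : ℤ} {x : ℚ} (hc : (c : ℚ) ∈ V) (hx : x ∈ V) :
    (c : ℚ) / x.den ∈ V := by
  obtain ⟨u, w, huw⟩ : IsCoprime x.num x.den := by
    rw [Int.isCoprime_iff_gcd_eq_one]
    exact x.reduced
  have huw' : (u : ℚ) * x.num + w * x.den = 1 := by exact_mod_cast huw
  have key : (c : ℚ) / x.den = (c * u) • x + w • (c : ℚ) := by
    have := x.den_ne_zero
    rw [zsmul_eq_mul, zsmul_eq_mul]
    push_cast
    nth_rw 2 [← Rat.num_div_den x]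
    field_simp
    linear_combination (-c : ℚ) * huw'
  rw [key]
  exact add_mem (zsmul_mem hx _) (zsmul_mem hc _)

theorem intCast_div_mem_of_dvd_den {c : ℤ} {x : ℚ} {d : ℕ} (hc : (c : ℚ) ∈ V)
    (hx : x ∈ V) (hd : d ∣ x.den) : (c : ℚ) / d ∈ V := by
  obtain ⟨m, hm⟩ := hd
  have hm0 : (m : ℚ) ≠ 0 := Nat.cast_ne_zero.mpr (right_ne_zero_of_mul (hm ▸ x.den_ne_zero))
  convert zsmul_mem (intCast_div_den_mem hc hx) (m : ℤ) using 1
  rw [hm, zsmul_eq_mul]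
  push_cast
  field_simp

theorem intCast_num_mem {x : ℚ} (hx : x ∈ V) : (x.num : ℚ) ∈ V := by
  rw [← Rat.den_mul_eq_num, ← nsmul_eq_mul]
  exact nsmul_mem hx _

end

theorem den_dvd_pow_of_mem_zOneOver {p : ℕ} {x : ℚ} (hx : x ∈ zOneOver p) :
    ∃ n, x.den ∣ p ^ n := by
  induction hx using closure_induction with
  | mem x hx =>
    obtain ⟨n, rfl⟩ := hx
    refine ⟨n, ?_⟩
    rw [one_div, ← Nat.cast_pow, Rat.inv_natCast_den]
    split_ifs <;> simp
  | zero => exact ⟨0, by simp⟩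
  | add x y _ _ hx hy =>
    obtain ⟨m, hm⟩ := hx
    obtain ⟨n, hn⟩ := hy
    exact ⟨m + n, (Rat.add_den_dvd x y).trans (pow_add p m n ▸ Nat.mul_dvd_mul hm hn)⟩
  | neg x _ hx => simpa using hx

theorem pow_dvd_den_of_not_den_dvd {p : ℕ} (hp : p.Prime) {x : ℚ} (hx : x ∈ zOneOver p)
    {n : ℕ} (h : ¬ x.den ∣ p ^ n) : p ^ n ∣ x.den := by
  obtain ⟨m, hm⟩ := den_dvd_pow_of_mem_zOneOver hx
  obtain ⟨k, -, hk⟩ := (Nat.dvd_prime_pow hp).mp hm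
  rw [hk] at h ⊢
  exact Nat.pow_dvd_pow p (not_le.mp (mt (Nat.pow_dvd_pow p) h)).le

/-- every noncyclic subgroup of ℤ[1/p] has finite index in ℤ[1/p]. -/
theorem stmt14 (p : ℕ) (hp : p.Prime) (V : AddSubgroup ℚ) (hV : V ≤ zOneOver p)
    (hnc : ¬ ∃ a : ℚ, V = AddSubgroup.closure {a}) :
    (V.addSubgroupOf (zOneOver p)).index ≠ 0 := by
  by_cases hbdd : ∃ N, ∀ x ∈ V, x.den ∣ p ^ N
  · obtain ⟨N, hN⟩ := hbdd
    have hle : V ≤ zmultiples ((p ^ N : ℕ) : ℚ)⁻¹ := fun x hx ↦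
      mem_zmultiples_inv_of_den_dvd (pow_ne_zero N hp.ne_zero) (hN x hx)
    obtain ⟨a, ha⟩ := (V.isAddCyclic_iff_exists_zmultiples_eq_top).mp (isAddCyclic_of_le hle)
    exact absurd ⟨a, ha ▸ zmultiples_eq_closure a⟩ hnc
  push Not at hbdd
  have hdeep (n : ℕ) : ∃ x ∈ V, p ^ n ∣ x.den := by
    obtain ⟨x, hx, hn⟩ := hbdd n
    exact ⟨x, hx, pow_dvd_den_of_not_den_dvd hp (hV hx) hn⟩
  have hK : zOneOver p ≤ V ⊔ zmultiples 1 := by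
    refine closure_le _ |>.mpr ?_
    rintro _ ⟨n, rfl⟩
    obtain ⟨x, hx, hn⟩ := hdeep n
    simpa using intCast_div_mem_of_dvd_den (c := 1) (mem_sup_right (mem_zmultiples 1))
      (mem_sup_left hx) hn
  obtain ⟨x, hx, hx_den⟩ := hbdd 0
  have hx0 : x ≠ 0 := by
    rintro rfl
    simp at hx_den
  exact relIndex_ne_zero_of_le_sup_zmultiples (Rat.num_ne_zero.mpr hx0)
    (by simpa using intCast_num_mem hx) hK
end

section
/- Suppose the abelian group G is the direct limit of matrices Cₙ : ℤ^s → ℤ^s, where each Cₙ has a common left eigenvector w ∈ ℤ^{1×s} with eigenvalue cₙ₊₁ ∈ ℤ, cₙ₊₁ ≥ 1 (i.e., w Cₙ = cₙ₊₁ w), and a common right eigenvector v ∈ ℤ^s with w·v ≠ 0. Then v is an eigenvector for the same eigenvalue cₙ₊₁ for each Cₙ, and the map t : G → ℚ defined by t[a, n] = (w·a)/(c₁⋯cₙ) satisfies: the subgroup H = ⋃ₙ ℤ·[v, n] of G maps under t onto a subgroup of finite index in t(G), so that ker t ⊕ H has finite index in G (the extension 0 → ker t → G → t(G) → 0 is nearly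 split). -/
/-!
Pairing `w Cₙ = cₙ w` with `v` and `Cₙ v = dₙ v` with `w` forces `dₙ = cₙ`, so
`[v, n] = cₙ • [v, n + 1]` and `H` is the increasing union of the cyclic groups `ℤ • [v, n]`,
on which `t` is injective because `t [v, n] = (w·v) / (c₀⋯cₙ₋₁) ≠ 0`.
Since `(w·v) • [a, n] - (w·a) • [v, n] ∈ ker t`, the quotient `G / (ker t + H)` is killed by
`m = w·v`; as an increasing union of images of `(ℤ/m)ˢ` it has at most `|m|ˢ` elements.
-/

open Matrix

/-- The product `C (n+j-1) * ⋯ * C (n+1) * C n` of the transition matrices from level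
`n` to level `n + j`. -/
def matProd {ι : Type*} [Fintype ι] [DecidableEq ι]
    (C : ℕ → Matrix ι ι ℤ) (n : ℕ) : ℕ → Matrix ι ι ℤ
  | 0 => 1
  | j + 1 => C (n + j) * matProd C n j

theorem Matrix.mulVec_eq_smul_of_vecMul_eq_smul {ι R : Type*} [Fintype ι] [CommRing R]
    [NoZeroDivisors R] {A : Matrix ι ι R} {w v : ι → R} {c d : R}
    (hw : vecMul w A = c • w) (hv : A *ᵥ v = d • v) (hwv : w ⬝ᵥ v ≠ 0) :
    A *ᵥ v = c • v := by
  have hdc : d * (w ⬝ᵥ v) = c * (w ⬝ᵥ v) := by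
    rw [← smul_eq_mul, ← dotProduct_smul, ← hv, dotProduct_mulVec, hw, smul_dotProduct,
      smul_eq_mul]
  rw [hv, mul_right_cancel₀ hwv hdc]

theorem AddSubgroup.exists_mem_zmultiples_of_mem_closure_range {G : Type*} [AddGroup G]
    {x : ℕ → G} (hx : ∀ n, x n ∈ zmultiples (x (n + 1))) {g : G}
    (hg : g ∈ closure (Set.range x)) : ∃ n, g ∈ zmultiples (x n) := by
  have hmono : Monotone fun n => zmultiples (x n) :=
    monotone_nat_of_le_succ fun n => zmultiples_le_of_mem (hx n)
  rw [← Set.iUnion_singleton_eq_range, closure_iUnion] at hg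
  simp only [← zmultiples_eq_closure] at hg
  exact (mem_iSup_of_directed hmono.directed_le).mp hg

theorem AddMonoidHom.ker_inf_closure_range_eq_bot {G A : Type*} [AddCommGroup G]
    [AddCommGroup A] [NoZeroSMulDivisors ℤ A] (t : G →+ A) {x : ℕ → G}
    (hx : ∀ n, x n ∈ AddSubgroup.zmultiples (x (n + 1))) (ht : ∀ n, t (x n) ≠ 0) :
    t.ker ⊓ AddSubgroup.closure (Set.range x) = ⊥ := by
  refine eq_bot_iff.mpr fun g ⟨hker, hg⟩ => ?_
  obtain ⟨n, k, rfl⟩ := AddSubgroup.exists_mem_zmultiples_of_mem_closure_range hx hg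
  have hk : k = 0 := by
    simpa [AddMonoidHom.mem_ker, map_zsmul, smul_eq_zero, ht n] using hker
  simp [hk]

theorem AddMonoidHom.zsmul_sub_zsmul_mem_ker {G K : Type*} [AddCommGroup G] [CommRing K]
    [NoZeroDivisors K] (t : G →+ K) {P : K} (hP : P ≠ 0) {g h : G} {a b : ℤ}
    (hg : P * t g = a) (hh : P * t h = b) : b • g - a • h ∈ t.ker := by
  rw [mem_ker, map_sub, map_zsmul, map_zsmul]
  refine mul_left_cancel₀ hP ?_
  simp only [zsmul_eq_mul, mul_sub, mul_zero]
  rw [mul_left_comm, hg, mul_left_comm, hh, mul_comm, sub_self]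

theorem Set.finite_of_directed_of_encard_le {ι α : Type*} [Nonempty ι] {S : ι → Set α}
    (hS : Directed (· ⊆ ·) S) (hcover : ⋃ i, S i = univ) (N : ℕ)
    (hN : ∀ i, (S i).encard ≤ N) : Finite α := by
  by_contra hinf
  have huniv : (univ : Set α).encard = ⊤ := by simpa [not_finite_iff_infinite] using hinf
  obtain ⟨T, -, hT⟩ := exists_subset_encard_eq (s := univ) (k := N + 1) 
    (by rw [huniv]; exact le_top)
  obtain ⟨i, hi⟩ := hS.exists_mem_subset_of_finset_subset_biUnion
    (s := (finite_of_encard_eq_coe hT).toFinset) (by simp [hcover])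
  have hle := (encard_le_encard (by simpa using hi)).trans (hN i)
  rw [hT] at hle
  norm_cast at hle
  omega

theorem AddMonoidHom.encard_range_le_of_zsmul_eq_zero {ι Q : Type*} [Fintype ι]
    [AddCommGroup Q] (ψ : (ι → ℤ) →+ Q) {m : ℤ} (hm : m ≠ 0) (htors : ∀ q : Q, m • q = 0) :
    (Set.range ψ).encard ≤ (m.natAbs ^ Fintype.card ι : ℕ) := by
  have : NeZero m.natAbs := ⟨Int.natAbs_ne_zero.mpr hm⟩
  let lift : (ι → ZMod m.natAbs) → ι → ℤ := fun x i => ((x i).val : ℤ)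
  have hsub : Set.range ψ ⊆ Set.range (ψ ∘ lift) := by
    rintro _ ⟨a, rfl⟩
    refine ⟨fun i => (a i : ZMod m.natAbs), ?_⟩
    have hdecomp : a = lift (fun i => (a i : ZMod m.natAbs)) + m • fun i => a i / m := by
      funext i
      simp only [lift, Pi.add_apply, Pi.smul_apply, smul_eq_mul, ZMod.val_intCast,
        Int.natCast_natAbs, Int.emod_abs]
      exact (Int.emod_add_mul_ediv (a i) m).symm
    conv_rhs => rw [hdecomp, map_add, map_zsmul, htors, add_zero]
    rfl
  calc (Set.range ψ).encard ≤ (Set.range (ψ ∘ lift)).encard := Set.encard_le_encard hsub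
    _ ≤ ENat.card (ι → ZMod m.natAbs) := by
      rw [← Set.image_univ, ← Set.encard_univ]; exact Set.encard_image_le _ _
    _ = _ := by simp

theorem QuotientAddGroup.finite_of_directed_union_of_zsmul_mem {ι G : Type*} [Fintype ι]
    [AddCommGroup G] (φ : ℕ → (ι → ℤ) →+ G)
    (hmono : ∀ n, Set.range (φ n) ⊆ Set.range (φ (n + 1)))
    (hsurj : ∀ g : G, ∃ n a, g = φ n a) (K : AddSubgroup G) {m : ℤ} (hm : m ≠ 0)
    (hK : ∀ g, m • g ∈ K) : Finite (G ⧸ K) := by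
  let ψ n := (QuotientAddGroup.mk' K).comp (φ n)
  have hψmono : Monotone fun n => Set.range (ψ n) := by
    refine monotone_nat_of_le_succ fun n => ?_
    rintro _ ⟨a, rfl⟩
    obtain ⟨b, hb⟩ := hmono n ⟨a, rfl⟩
    exact ⟨b, congrArg (QuotientAddGroup.mk' K) hb⟩
  have hcover : ⋃ n, Set.range (ψ n) = Set.univ := by
    refine Set.eq_univ_of_forall fun q => ?_
    obtain ⟨g, rfl⟩ := QuotientAddGroup.mk'_surjective K q
    obtain ⟨n, a, rfl⟩ := hsurj g
    exact Set.mem_iUnion.mpr ⟨n, a, rfl⟩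
  have htors : ∀ q : G ⧸ K, m • q = 0 := fun q =>
    QuotientAddGroup.induction_on q fun g => (QuotientAddGroup.eq_zero_iff _).mpr (hK g)
  exact Set.finite_of_directed_of_encard_le hψmono.directed_le hcover _
    fun n => (ψ n).encard_range_le_of_zsmul_eq_zero hm htors

theorem stmt18_general {s : ℕ} (C : ℕ → Matrix (Fin s) (Fin s) ℤ)
    (w : Fin s → ℤ) (c : ℕ → ℤ) (hc : ∀ n, 1 ≤ c n)
    (heigw : ∀ n, Matrix.vecMul w (C n) = c n • w)
    (v : Fin s → ℤ) (d : ℕ → ℤ) (heigv : ∀ n, (C n).mulVec v = d n • v)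
    (hwv : w ⬝ᵥ v ≠ 0)
    {G : Type*} [AddCommGroup G] (φ : ℕ → (Fin s → ℤ) →+ G)
    (hcomp : ∀ n a, φ n a = φ (n + 1) ((C n).mulVec a))
    (hsurj : ∀ g : G, ∃ n a, g = φ n a)
    (t : G →+ ℚ)
    (ht : ∀ n a, (∏ i ∈ Finset.range n, (c i : ℚ)) * t (φ n a) = ((w ⬝ᵥ a : ℤ) : ℚ)) :
    (∀ n, (C n).mulVec v = c n • v) ∧
    t.ker ⊓ AddSubgroup.closure {g : G | ∃ n, g = φ n v} = ⊥ ∧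
    (t.ker ⊔ AddSubgroup.closure {g : G | ∃ n, g = φ n v}).index ≠ 0 := by
  have hCv n : (C n).mulVec v = c n • v :=
    mulVec_eq_smul_of_vecMul_eq_smul (heigw n) (heigv n) hwv
  have hprod n : (∏ i ∈ Finset.range n, (c i : ℚ)) ≠ 0 :=
    Finset.prod_ne_zero_iff.mpr fun i _ => by exact_mod_cast (one_pos.trans_le (hc i)).ne'
  have hH : {g : G | ∃ n, g = φ n v} = Set.range fun n => φ n v := by
    ext g; exact exists_congr fun n => eq_comm
  have hchain n : φ n v ∈ AddSubgroup.zmultiples (φ (n + 1) v) :=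
    ⟨c n, by dsimp only; rw [hcomp n v, hCv, map_zsmul]⟩
  have htv n : t (φ n v) ≠ 0 :=
    right_ne_zero_of_mul (a := ∏ i ∈ Finset.range n, (c i : ℚ))
      (by rw [ht]; exact_mod_cast hwv)
  rw [hH]
  set H := AddSubgroup.closure (Set.range fun n => φ n v)
  have hK g : (w ⬝ᵥ v) • g ∈ t.ker ⊔ H := by
    obtain ⟨n, a, rfl⟩ := hsurj g
    have hvH : φ n v ∈ H := AddSubgroup.subset_closure (Set.mem_range_self (f := fun n => φ n v) n)
    simpa only [sub_add_cancel] using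
      add_mem (AddSubgroup.mem_sup_left (t.zsmul_sub_zsmul_mem_ker (hprod n) (ht n a) (ht n v)))
        (AddSubgroup.mem_sup_right (zsmul_mem hvH (w ⬝ᵥ a)))
  have : Finite (G ⧸ t.ker ⊔ H) :=
    QuotientAddGroup.finite_of_directed_union_of_zsmul_mem φ
      (fun n => by rintro _ ⟨a, rfl⟩; exact ⟨_, (hcomp n a).symm⟩) hsurj _ hwv hK
  exact ⟨hCv, t.ker_inf_closure_range_eq_bot hchain htv, AddSubgroup.index_ne_zero_of_finite⟩

/-- if G = lim Cₙ with common left eigenvector w (eigenvalue cₙ ≥ 1) and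
common right eigenvector v with w·v ≠ 0, then v is a cₙ-eigenvector of each Cₙ, and for
the trace t[a,n] = (w·a)/(c₀⋯cₙ₋₁) and H = ⋃ₙ ℤ·[v,n], we have ker t ∩ H = 0 and
ker t ⊔ H of finite index in G (the extension is nearly split). -/
theorem stmt18 {s : ℕ} (C : ℕ → Matrix (Fin s) (Fin s) ℤ)
    (w : Fin s → ℤ) (hw : w ≠ 0) (c : ℕ → ℤ) (hc : ∀ n, 1 ≤ c n)
    (heigw : ∀ n, Matrix.vecMul w (C n) = c n • w)
    (v : Fin s → ℤ) (d : ℕ → ℤ) (heigv : ∀ n, (C n).mulVec v = d n • v)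
    (hwv : w ⬝ᵥ v ≠ 0)
    {G : Type*} [AddCommGroup G] (φ : ℕ → (Fin s → ℤ) →+ G)
    (hcomp : ∀ n a, φ n a = φ (n + 1) ((C n).mulVec a))
    (hsurj : ∀ g : G, ∃ n a, g = φ n a)
    (hker : ∀ n a, φ n a = 0 → ∃ j, (matProd C n j).mulVec a = 0)
    (t : G →+ ℚ)
    (ht : ∀ n a, (∏ i ∈ Finset.range n, (c i : ℚ)) * t (φ n a) = ((w ⬝ᵥ a : ℤ) : ℚ)) :
    (∀ n, (C n).mulVec v = c n • v) ∧
    t.ker ⊓ AddSubgroup.closure {g : G | ∃ n, g = φ n v} = ⊥ ∧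
    (t.ker ⊔ AddSubgroup.closure {g : G | ∃ n, g = φ n v}).index ≠ 0 :=
  stmt18_general C w c hc heigw v d heigv hwv φ hcomp hsurj t ht
end
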